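/- arXiv:2502.18053 — 2 statements merged into one kernel-verified Lean document; each statement's English description precedes it below -/
import Mathlib

section
/- Let $F$ be a finite extension of $\mathbf{Q}_p$ with ring of integers $o_F$, and let $\operatorname{LT}$ be a Lubin--Tate formal group over $o_F$ with endomorphisms $[a](X) \in o_F[[X]]$ for $a \in o_F$. For each $f \in o_F[[X]]$ and $n \geq 0$, there exists a unique polynomial $c_{f,n}(T) \in F[T]$ such that $f([a](X)) = \sum_{n\geq 0} c_{f,n}(a) X^n$ for all $a \in o_F$; moreover $c_{f,n}$ is integer-valued, i.e. $c_{f,n}(o_F) \subset o_F$. -/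
/-!
Write `[a](X) = ∑ eₘ(a) Xᵐ`. Comparing the coefficients of `Xᵐ` in `[a] ∘ [π] = [π] ∘ [a]`
gives `(πᵐ - π) eₘ(a) = Q(e₁(a), …, eₘ₋₁(a))` for a polynomial `Q` over `o_F`, and `πᵐ ≠ π`
for `m ≥ 2`; by induction every `eₘ` is a polynomial function of `a` with coefficients in `F`.
The coefficients of `f([a](X))` are polynomials over `o_F` in the `eₘ(a)`, so they are
polynomial functions too, integer-valued since they take values in `o_F`, and the polynomial
is unique because `o_F` is infinite.
-/

open PowerSeries

/-- Composition `f(g(X))` of formal power series (valid when `g` has zero constant term):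
the coefficient of `X^m` in `∑ n, f_n g(X)^n` only involves `n ≤ m`. -/
noncomputable def PSComp {R : Type*} [CommRing R] (f g : PowerSeries R) : PowerSeries R :=
  PowerSeries.mk fun m => ∑ n ∈ Finset.range (m + 1),
    PowerSeries.coeff (R := R) m (PowerSeries.C (R := R) (PowerSeries.coeff (R := R) n f) * g ^ n)

/-- Evaluation `A(u,v)` of a two-variable power series `A ∈ R[[X,Y]] = (R[[X]])[[Y]]`
at `u, v` with zero constant term. -/
noncomputable def PSEval2 {R : Type*} [CommRing R] (A : PowerSeries (PowerSeries R))
    (u v : PowerSeries R) : PowerSeries R :=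
  PowerSeries.mk fun m => ∑ j ∈ Finset.range (m + 1),
    PowerSeries.coeff (R := R) m (PSComp (PowerSeries.coeff (R := PowerSeries R) j A) u * v ^ j)

/-- A Lubin--Tate formal group over `O` attached to the uniformizer `π`, with residue
cardinality `q`: the addition law `add ∈ O[[X,Y]]`, the endomorphisms `[a](X)` for
`a ∈ O`, normalized so that `[a](X) = aX + O(X^2)`, compatible with the ring structure
of `O`, and such that `[π](X) ≡ X^q mod π`. -/
structure LubinTate (O : Type*) [CommRing O] (π : O) (q : ℕ) where
  add : PowerSeries (PowerSeries O)
  endo : O → PowerSeries O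
  endo_const : ∀ a, PowerSeries.constantCoeff (R := O) (endo a) = 0
  endo_lin : ∀ a, PowerSeries.coeff (R := O) 1 (endo a) = a
  endo_one : endo 1 = PowerSeries.X
  endo_mul : ∀ a b, endo (a * b) = PSComp (endo a) (endo b)
  endo_add : ∀ a b, endo (a + b) = PSEval2 add (endo a) (endo b)
  add_X_zero : PSEval2 add PowerSeries.X 0 = PowerSeries.X
  add_zero_X : PSEval2 add 0 PowerSeries.X = PowerSeries.X
  endo_pi_frob : ∀ n : ℕ,
    PowerSeries.coeff (R := O) n (endo π) - (if n = q then 1 else 0) ∈ Ideal.span {π}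

open Polynomial in
/-- Functions `h : R → R` for which `φ ∘ h` agrees on `φ(R)` with a polynomial over `S`. -/
noncomputable def polyFunctionsVia {R S : Type*} [CommRing R] [CommRing S] (φ : R →+* S) :
    Subring (R → R) :=
  (RingHom.pi fun a => evalRingHom (φ a)).range.comap (φ.compLeft R)

section polyFunctionsVia

variable {R S : Type*} [CommRing R] [CommRing S] {φ : R →+* S}

theorem mem_polyFunctionsVia {h : R → R} :
    h ∈ polyFunctionsVia φ ↔ ∃ P : Polynomial S, ∀ a, P.eval (φ a) = φ (h a) := by
  simp [polyFunctionsVia, funext_iff, RingHom.pi_apply]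

theorem const_mem_polyFunctionsVia (c : R) : (fun _ => c) ∈ polyFunctionsVia φ :=
  mem_polyFunctionsVia.2 ⟨Polynomial.C (φ c), fun _ => Polynomial.eval_C⟩

theorem fun_sum_mem_polyFunctionsVia {ι : Type*} {s : Finset ι} {g : ι → R → R}
    (hg : ∀ i ∈ s, g i ∈ polyFunctionsVia φ) : (fun a => ∑ i ∈ s, g i a) ∈ polyFunctionsVia φ := by
  rw [← Finset.sum_fn]
  exact sum_mem hg

end polyFunctionsVia

theorem mem_polyFunctionsVia_of_const_mul {R S : Type*} [CommRing R] [Field S] {φ : R →+* S}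
    {c : R} (hc : φ c ≠ 0) {h : R → R} (hch : (fun a => c * h a) ∈ polyFunctionsVia φ) :
    h ∈ polyFunctionsVia φ := by
  obtain ⟨P, hP⟩ := mem_polyFunctionsVia.1 hch
  refine mem_polyFunctionsVia.2 ⟨Polynomial.C (φ c)⁻¹ * P, fun a => ?_⟩
  rw [Polynomial.eval_mul, Polynomial.eval_C, hP a, map_mul, inv_mul_cancel_left₀ hc]

theorem Polynomial.eq_of_eval_map_eq {R S : Type*} [CommRing R] [CommRing S] [IsDomain S]
    [CharZero S] (φ : R →+* S) {P Q : Polynomial S} (h : ∀ a, P.eval (φ a) = Q.eval (φ a)) :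
    P = Q := by
  refine Polynomial.eq_of_infinite_eval_eq P Q
    ((Set.infinite_range_of_injective Nat.cast_injective).mono ?_)
  rintro _ ⟨k, rfl⟩
  simpa using h k

namespace PowerSeries

variable {R : Type*} [CommRing R]

theorem coeff_PSComp (f g : R⟦X⟧) (m : ℕ) :
    coeff m (PSComp f g) = ∑ k ∈ Finset.range (m + 1), coeff k f * coeff m (g ^ k) := by
  simp [PSComp, coeff_C_mul]

theorem coeff_pow_self_of_constantCoeff_eq_zero {g : R⟦X⟧} (hg : constantCoeff g = 0) (n : ℕ) :
    coeff n (g ^ n) = coeff 1 g ^ n := by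
  obtain ⟨h, rfl⟩ := X_dvd_iff.mpr hg
  simpa [mul_pow, coeff_zero_eq_constantCoeff] using coeff_X_pow_mul (h ^ n) n 0

variable {S : Type*} [CommRing S] {φ : R →+* S} {e : R → R⟦X⟧} {m : ℕ}

theorem coeff_pow_mem_polyFunctionsVia_of_lt
    (he : ∀ l < m, (fun a => coeff l (e a)) ∈ polyFunctionsVia φ) (k : ℕ) :
    ∀ l < m, (fun a => coeff l (e a ^ k)) ∈ polyFunctionsVia φ := by
  induction k with
  | zero =>
    intro l _
    simpa only [pow_zero] using const_mem_polyFunctionsVia (coeff l (1 : R⟦X⟧))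
  | succ k ih =>
    intro l hl
    simp only [pow_succ, coeff_mul]
    refine fun_sum_mem_polyFunctionsVia fun ij hij => ?_
    have hij : ij.1 + ij.2 = l := Finset.HasAntidiagonal.mem_antidiagonal.mp hij
    exact mul_mem (ih ij.1 (by omega)) (he ij.2 (by omega))

/-- As `e a` has no constant term, for `k ≠ 1` the `m`-th coefficient of `(e a) ^ k` only
involves coefficients of `e a` of index `< m`. -/
theorem coeff_pow_mem_polyFunctionsVia_of_ne_one (h0 : ∀ a, constantCoeff (e a) = 0)
    (he : ∀ l < m, (fun a => coeff l (e a)) ∈ polyFunctionsVia φ) {k : ℕ} (hk : k ≠ 1) :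
    (fun a => coeff m (e a ^ k)) ∈ polyFunctionsVia φ := by
  obtain _ | _ | k := k
  · simpa only [pow_zero] using const_mem_polyFunctionsVia (coeff m (1 : R⟦X⟧))
  · exact absurd rfl hk
  simp only [pow_succ _ (k + 1), coeff_mul]
  refine fun_sum_mem_polyFunctionsVia fun ij hij => ?_
  have hij : ij.1 + ij.2 = m := Finset.HasAntidiagonal.mem_antidiagonal.mp hij
  obtain ⟨i, j⟩ := ij
  obtain rfl | hj := Nat.eq_zero_or_pos j
  · simpa [coeff_zero_eq_constantCoeff, h0] using const_mem_polyFunctionsVia (φ := φ) 0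
  obtain rfl | hi := Nat.eq_zero_or_pos i
  · simpa [coeff_zero_eq_constantCoeff, h0] using const_mem_polyFunctionsVia (φ := φ) 0
  exact mul_mem (coeff_pow_mem_polyFunctionsVia_of_lt he (k + 1) i (by omega)) (he j (by omega))

theorem coeff_PSComp_mem_polyFunctionsVia
    (he : ∀ l, (fun a => coeff l (e a)) ∈ polyFunctionsVia φ) (f : R⟦X⟧) (n : ℕ) :
    (fun a => coeff n (PSComp f (e a))) ∈ polyFunctionsVia φ := by
  simp only [coeff_PSComp]
  exact fun_sum_mem_polyFunctionsVia fun k _ => mul_mem (const_mem_polyFunctionsVia _)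
    (coeff_pow_mem_polyFunctionsVia_of_lt (m := n + 1) (fun l _ => he l) k n n.lt_succ_self)

end PowerSeries

theorem map_pow_sub_self_ne_zero {R S : Type*} [CommRing R] [Field S] {φ : R →+* S}
    (hφ : Function.Injective φ) {π : R} (hπ0 : π ≠ 0) (hπu : ¬IsUnit π) {n : ℕ} (hn : 2 ≤ n) :
    φ (π ^ n - π) ≠ 0 := by
  obtain ⟨k, rfl⟩ := Nat.exists_eq_add_of_le' hn
  have hφπ : φ π ≠ 0 := (map_ne_zero_iff φ hφ).2 hπ0
  have hpow : φ π ^ (k + 1) ≠ 1 := fun h =>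
    hπu (IsUnit.of_pow_eq_one (hφ (by rw [map_pow, h, map_one])) k.succ_ne_zero)
  have hfac : φ (π ^ (k + 2) - π) = φ π * (φ π ^ (k + 1) - 1) := by
    rw [map_sub, map_pow]; ring
  rw [hfac]
  exact mul_ne_zero hφπ (sub_ne_zero.2 hpow)

open PowerSeries in
theorem coeff_mem_polyFunctionsVia_of_commute {R S : Type*} [CommRing R] [Field S]
    {φ : R →+* S} (hφ : Function.Injective φ) {e : R → R⟦X⟧}
    (h0 : ∀ a, constantCoeff (e a) = 0) (h1 : ∀ a, coeff 1 (e a) = a) {π : R} (hπ0 : π ≠ 0)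
    (hπu : ¬IsUnit π) (hcomm : ∀ a, PSComp (e a) (e π) = PSComp (e π) (e a)) (m : ℕ) :
    (fun a => coeff m (e a)) ∈ polyFunctionsVia φ := by
  induction m using Nat.strong_induction_on with
  | _ m ih =>
    obtain _ | _ | m := m
    · simpa [coeff_zero_eq_constantCoeff, h0] using const_mem_polyFunctionsVia (φ := φ) 0
    · exact mem_polyFunctionsVia.2 ⟨Polynomial.X, by simp [h1]⟩
    have hsplit : ∀ a, (π ^ (m + 2) - π) * coeff (m + 2) (e a) =
        ∑ k ∈ (Finset.range (m + 3)).erase 1, coeff k (e π) * coeff (m + 2) (e a ^ k) -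
          ∑ k ∈ Finset.range (m + 2), coeff k (e a) * coeff (m + 2) (e π ^ k) := by
      intro a
      have hc := congrArg (coeff (m + 2)) (hcomm a)
      rw [coeff_PSComp, coeff_PSComp, Finset.sum_range_succ,
        coeff_pow_self_of_constantCoeff_eq_zero (h0 π), h1,
        ← Finset.add_sum_erase _ _ (by simp : 1 ∈ Finset.range (m + 3)), h1, pow_one] at hc
      linear_combination hc
    refine mem_polyFunctionsVia_of_const_mul
      (map_pow_sub_self_ne_zero hφ hπ0 hπu (n := m + 2) le_add_self) ?_
    simp only [hsplit]
    refine sub_mem (fun_sum_mem_polyFunctionsVia fun k hk => mul_mem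
      (const_mem_polyFunctionsVia _) ?_) (fun_sum_mem_polyFunctionsVia fun k hk => mul_mem
      (ih k (Finset.mem_range.1 hk)) (const_mem_polyFunctionsVia _))
    exact coeff_pow_mem_polyFunctionsVia_of_ne_one h0 ih (Finset.ne_of_mem_erase hk)

theorem stmt9_general (p : ℕ) [Fact p.Prime] (F : Type*) [Field F] [Algebra ℚ_[p] F]
    [Algebra ℤ_[p] F]
    (O : Subalgebra ℤ_[p] F)
    (π : ↥O) (hπ : Irreducible π) (q : ℕ)
    (LT : LubinTate ↥O π q) :
    ∀ (f : PowerSeries ↥O) (n : ℕ), ∃! c : Polynomial F,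
      (∀ a : ↥O, Polynomial.eval (algebraMap ↥O F a) c =
        algebraMap ↥O F (PowerSeries.coeff (R := ↥O) n (PSComp f (LT.endo a)))) ∧
      (∀ a : ↥O, Polynomial.eval (algebraMap ↥O F a) c ∈ O) := by
  intro f n
  have : CharZero F := charZero_of_injective_algebraMap (algebraMap ℚ_[p] F).injective
  have hendo (m : ℕ) : (fun a => coeff m (LT.endo a)) ∈ polyFunctionsVia (algebraMap O F) :=
    coeff_mem_polyFunctionsVia_of_commute Subtype.val_injective LT.endo_const LT.endo_lin
      hπ.ne_zero hπ.not_isUnit (fun a => by rw [← LT.endo_mul, ← LT.endo_mul, mul_comm]) m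
  obtain ⟨P, hP⟩ := mem_polyFunctionsVia.1 (coeff_PSComp_mem_polyFunctionsVia hendo f n)
  refine ⟨P, ⟨hP, fun a => hP a ▸ SetLike.coe_mem _⟩, fun c hc => ?_⟩
  exact Polynomial.eq_of_eval_map_eq (algebraMap O F) fun a => (hc.1 a).trans (hP a).symm

/-- For each `f ∈ o_F[[X]]` and `n`, there is a unique polynomial `c_(f,n) ∈ F[T]` with
`f([a](X)) = ∑ n, c_(f,n)(a) X^n` for all `a ∈ o_F`, and it is integer-valued. -/
theorem stmt9 (p : ℕ) [Fact p.Prime] (F : Type*) [Field F] [Algebra ℚ_[p] F]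
    [FiniteDimensional ℚ_[p] F] [Algebra ℤ_[p] F] [IsScalarTower ℤ_[p] ℚ_[p] F]
    (O : Subalgebra ℤ_[p] F) (hO : O = integralClosure ℤ_[p] F)
    (π : ↥O) (hπ : Irreducible π) (q : ℕ)
    (hq : Nat.card (↥O ⧸ Ideal.span {π}) = q)
    (LT : LubinTate ↥O π q) :
    ∀ (f : PowerSeries ↥O) (n : ℕ), ∃! c : Polynomial F,
      (∀ a : ↥O, Polynomial.eval (algebraMap ↥O F a) c =
        algebraMap ↥O F (PowerSeries.coeff (R := ↥O) n (PSComp f (LT.endo a)))) ∧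
      (∀ a : ↥O, Polynomial.eval (algebraMap ↥O F a) c ∈ O) :=
  stmt9_general p F O π hπ q LT
end

section
/- Let $F$ be a finite extension of $\mathbf{Q}_p$ with ring of integers $o_F$, Lubin--Tate formal group $\operatorname{LT}$, and for $f \in o_F[[X]]$ let $c_{f,n} \in \operatorname{Int}$ be defined by $f([a](X)) = \sum_n c_{f,n}(a)X^n$. For a subset $M \subseteq o_F[[X]]$ let $\operatorname{Pol}(M)$ be the $o_F$-span of all $c_{f,n}$ with $f \in M$. If $M \in \{o_F[[X]], o_F[[X]]^{\psi=0}\}$ and $b \in o_F^\times$, then $\operatorname{Pol}(M)$ is stable under the substitution $P(T) \mapsto P(bT)$. -/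
/-!
Since `[a] ∘ [b] = [ab]`, the polynomials `c_{f,n}(bT)` and `c_{f∘[b],n}(T)` agree at every
integer, so they are equal, and it remains to see that `f ↦ f ∘ [b]` preserves `M`. For
`M = o_F[[X]]^{ψ=0}`: composition with `[b]` is a ring automorphism `σ` commuting with
`φ = (· ∘ [π])`, so it transforms the matrix of multiplication by `f` in the basis
`1, X, …, X^(q-1)` of `o_F[[X]]` over `φ(o_F[[X]])` into a conjugate of the matrix of `σ f`.
Hence `σ` commutes with the trace, and thus with `ψ`. Coordinates in this basis are unique
because `[π] ≡ X^q mod π` and `o_F` is `π`-adically separated.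
-/

open PowerSeries

open Finset
open scoped Matrix

theorem PSComp_eq_subst {A : Type*} [CommRing A] (f : A⟦X⟧) {g : A⟦X⟧}
    (hg : constantCoeff g = 0) : PSComp f g = subst g f := by
  ext m
  rw [PSComp, coeff_mk, coeff_subst' (HasSubst.of_constantCoeff_zero' hg),
    finsum_eq_sum_of_support_subset _ (s := range (m + 1))]
  · simp only [coeff_C_mul, smul_eq_mul]
  · intro n hn
    by_contra hmn
    simp only [Function.mem_support, coe_range, Set.mem_Iio, not_lt] at hn hmn
    refine hn ?_
    rw [coeff_of_lt_order m ((Nat.cast_lt.mpr hmn).trans_le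
      (le_order_pow_of_constantCoeff_eq_zero n hg)), smul_zero]

section Coordinates

variable {R ι : Type*} [CommRing R] [Fintype ι]

/-- `R` is free over the subring `φ(R)` with basis `e`, and `c f` are the coordinates of `f`. -/
structure IsCoords (φ : R →+* R) (e : ι → R) (c : R → ι → R) : Prop where
  repr : ∀ f, f = ∑ i, e i * φ (c f i)
  eq_zero : ∀ g : ι → R, ∑ i, e i * φ (g i) = 0 → g = 0

/-- For `s = (· * f)` this is the matrix of multiplication by `f`, whose trace is the trace of `f`
over `φ(R)`. -/
def coordMatrix (e : ι → R) (c : R → ι → R) (s : R → R) : Matrix ι ι R :=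
  Matrix.of fun j i => c (s (e i)) j

variable {φ : R →+* R} {e : ι → R} {c : R → ι → R}

theorem sum_mul_map_eq_sum_map_sum (a : ι → ι → R) (w : ι → R) :
    ∑ i, (∑ j, e j * φ (a j i)) * φ (w i) = ∑ j, e j * φ (∑ i, a j i * w i) := by
  simp only [Finset.sum_mul, map_sum, Finset.mul_sum, map_mul, mul_assoc]
  exact Finset.sum_comm

namespace IsCoords

theorem eq_of_repr (hc : IsCoords φ e c) {f : R} {g : ι → R} (h : f = ∑ i, e i * φ (g i)) :
    c f = g :=
  sub_eq_zero.mp <| hc.eq_zero _ <| by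
    simp only [Pi.sub_apply, map_sub, mul_sub, Finset.sum_sub_distrib, ← hc.repr f, ← h,
      sub_self]

theorem apply_basis [DecidableEq ι] (hc : IsCoords φ e c) (i : ι) : c (e i) = Pi.single i 1 :=
  hc.eq_of_repr <| by simp [Pi.single_apply]

theorem apply_mul (hc : IsCoords φ e c) (x y : R) :
    c (x * y) = coordMatrix e c (· * x) *ᵥ c y :=
  hc.eq_of_repr <| calc
    x * y = ∑ i, (e i * x) * φ (c y i) := by
      conv_lhs => rw [hc.repr y, Finset.mul_sum]
      exact Finset.sum_congr rfl fun i _ => by ring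
    _ = ∑ i, (∑ j, e j * φ (c (e i * x) j)) * φ (c y i) := by simp only [← hc.repr]
    _ = _ := sum_mul_map_eq_sum_map_sum _ _

theorem apply_map {F : Type*} [FunLike F R R] [RingHomClass F R R] (hc : IsCoords φ e c)
    (σ : F) (hσ : ∀ r, σ (φ r) = φ (σ r)) (f : R) :
    c (σ f) = coordMatrix e c σ *ᵥ fun i => σ (c f i) :=
  hc.eq_of_repr <| calc
    σ f = ∑ i, σ (e i) * φ (σ (c f i)) := by
      conv_lhs => rw [hc.repr f]
      simp only [map_sum, map_mul, hσ]
    _ = ∑ i, (∑ j, e j * φ (c (σ (e i)) j)) * φ (σ (c f i)) := by simp only [← hc.repr]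
    _ = _ := sum_mul_map_eq_sum_map_sum _ _

/-- The matrix of `σ f` is conjugate, by the matrix of `σ`, to that of `f` with `σ` applied
entrywise. -/
theorem trace_mul_map [DecidableEq ι] (hc : IsCoords φ e c) (σ : R ≃+* R)
    (hσ : ∀ r, σ (φ r) = φ (σ r)) (f : R) :
    (coordMatrix e c (· * σ f)).trace = σ (coordMatrix e c (· * f)).trace := by
  set P := coordMatrix e c σ
  set Q := (coordMatrix e c σ.symm).map σ
  have hPQ : P * Q = 1 := by
    ext j i
    change (P *ᵥ fun k => σ (c (σ.symm (e i)) k)) j = _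
    rw [← hc.apply_map σ hσ, RingEquiv.apply_symm_apply, hc.apply_basis, Matrix.one_apply,
      Pi.single_apply]
  have hconj : coordMatrix e c (· * σ f) * P = P * (coordMatrix e c (· * f)).map σ := by
    ext j i
    change (coordMatrix e c (· * σ f) *ᵥ c (σ (e i))) j =
      (P *ᵥ fun k => σ (c (e i * f) k)) j
    rw [← hc.apply_mul, ← hc.apply_map σ hσ, map_mul, mul_comm]
  calc (coordMatrix e c (· * σ f)).trace
      = (coordMatrix e c (· * σ f) * P * Q).trace := by rw [mul_assoc, hPQ, mul_one]
    _ = ((coordMatrix e c (· * f)).map σ * (Q * P)).trace := by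
      rw [hconj, mul_assoc, Matrix.trace_mul_comm, mul_assoc]
    _ = σ (coordMatrix e c (· * f)).trace := by
      rw [mul_eq_one_comm.mp hPQ, mul_one, AddMonoidHom.map_trace]

theorem commute_of_mul_eq_trace [IsDomain R] [DecidableEq ι] (hc : IsCoords φ e c)
    (σ : R ≃+* R) (hσ : ∀ r, σ (φ r) = φ (σ r)) {t : R} (ht : t ≠ 0) (hσt : σ t = t)
    {ψ : R → R} (hψ : ∀ f, t * ψ f = (coordMatrix e c (· * f)).trace) (f : R) :
    ψ (σ f) = σ (ψ f) :=
  mul_left_cancel₀ ht <| by rw [hψ, hc.trace_mul_map σ hσ, ← hψ, map_mul, hσt]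

end IsCoords

end Coordinates

section Independence

variable {A : Type*} [CommRing A]

theorem eq_zero_of_sum_X_pow_mul_subst_X_pow_eq_zero {q : ℕ} {h : Fin q → A⟦X⟧}
    (hh : ∑ i : Fin q, X ^ (i : ℕ) * subst ((X : A⟦X⟧) ^ q) (h i) = 0) : h = 0 := by
  funext i₀
  ext t
  have hq : q ≠ 0 := i₀.pos.ne'
  have hcoeff := congrArg (coeff ((i₀ : ℕ) + q * t)) hh
  rw [map_sum, Finset.sum_eq_single i₀] at hcoeff
  · simpa [coeff_X_pow_mul', coeff_subst_X_pow hq, hq] using hcoeff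
  · intro i _ hi
    rw [coeff_X_pow_mul', coeff_subst_X_pow hq]
    split_ifs with hle hdvd
    · have hmod := (Nat.modEq_iff_dvd' hle).mpr hdvd
      rw [Nat.ModEq, Nat.mod_eq_of_lt i.isLt, Nat.add_mul_mod_self_left,
        Nat.mod_eq_of_lt i₀.isLt] at hmod
      exact absurd (Fin.ext hmod) hi
    all_goals rfl
  · simp

theorem C_dvd_of_forall_dvd_coeff {a : A} {f : A⟦X⟧} (h : ∀ n, a ∣ coeff n f) :
    C a ∣ f := by
  choose d hd using h
  exact ⟨mk d, by ext n; simp [hd]⟩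

variable {π : A} {q : ℕ} {E : A⟦X⟧}

theorem C_dvd_of_sum_X_pow_mul_subst_eq_zero (hE : HasSubst E)
    (hEq : map (Ideal.Quotient.mk (Ideal.span {π})) E = X ^ q) {h : Fin q → A⟦X⟧}
    (hh : ∑ i : Fin q, X ^ (i : ℕ) * subst E (h i) = 0) (i : Fin q) : C π ∣ h i := by
  set ρ := Ideal.Quotient.mk (Ideal.span {π})
  have hmap (g : A⟦X⟧) :
      map ρ (subst E g) = subst ((X : (A ⧸ Ideal.span {π})⟦X⟧) ^ q) (map ρ g) := by
    rw [← hEq]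
    exact map_subst hE g
  have hmod : ∑ i : Fin q,
      X ^ (i : ℕ) * subst ((X : (A ⧸ Ideal.span {π})⟦X⟧) ^ q) (map ρ (h i)) = 0 := by
    simpa [hmap] using congrArg (map ρ) hh
  have hi : map ρ (h i) = 0 := congrFun (eq_zero_of_sum_X_pow_mul_subst_X_pow_eq_zero hmod) i
  refine C_dvd_of_forall_dvd_coeff fun n => Ideal.mem_span_singleton.mp ?_
  rw [← Ideal.Quotient.eq_zero_iff_mem, ← coeff_map, hi, map_zero]

/-- A relation is divisible by `π` (modulo `π` it becomes a relation over `A⟦X^q⟧`), hence by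
every power of `π`, hence zero by Krull's intersection theorem. -/
theorem eq_zero_of_sum_X_pow_mul_subst_eq_zero [IsDomain A] [IsNoetherianRing A]
    (hπ : ¬IsUnit π) (hπ0 : π ≠ 0) (hE : HasSubst E)
    (hEq : map (Ideal.Quotient.mk (Ideal.span {π})) E = X ^ q) {h : Fin q → A⟦X⟧}
    (hh : ∑ i : Fin q, X ^ (i : ℕ) * subst E (h i) = 0) : h = 0 := by
  have hCπ : C π ≠ 0 := (map_ne_zero_iff C C_injective).mpr hπ0
  have hsubstC : subst E (C π) = C π := subst_C π
  have hdesc : ∀ n (h : Fin q → A⟦X⟧), ∑ i : Fin q, X ^ (i : ℕ) * subst E (h i) = 0 →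
      ∀ i, h i ∈ Ideal.span {C π} ^ n := by
    intro n
    induction n with
    | zero => simp
    | succ n ih =>
      intro h hh i
      choose h' hh' using C_dvd_of_sum_X_pow_mul_subst_eq_zero hE hEq hh
      have hh'0 : ∑ i : Fin q, X ^ (i : ℕ) * subst E (h' i) = 0 := by
        refine (mul_eq_zero.mp ?_).resolve_left hCπ
        rw [← hh, Finset.mul_sum]
        refine Finset.sum_congr rfl fun i _ => ?_
        rw [hh' i, subst_mul hE, hsubstC]
        ring
      rw [pow_succ', hh' i]
      exact Ideal.mul_mem_mul (Ideal.mem_span_singleton_self _) (ih h' hh'0 i)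
  have hKrull := Ideal.iInf_pow_eq_bot_of_isDomain (Ideal.span {C π})
    (Ideal.span_singleton_ne_top fun hu => hπ (by simpa using hu.map constantCoeff))
  funext i
  simpa [← Ideal.mem_bot, ← hKrull] using Submodule.mem_iInf _ |>.mpr fun n => hdesc n h hh i

end Independence

namespace LubinTate

variable {O : Type*} [CommRing O] {π : O} {q : ℕ} (LT : LubinTate O π q)

theorem hasSubst_endo (a : O) : HasSubst (LT.endo a) :=
  HasSubst.of_constantCoeff_zero' (LT.endo_const a)

theorem subst_endo_subst_endo (f : O⟦X⟧) (a b : O) :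
    subst (LT.endo b) (subst (LT.endo a) f) = subst (LT.endo (a * b)) f := by
  rw [subst_comp_subst_apply (LT.hasSubst_endo a) (LT.hasSubst_endo b), LT.endo_mul,
    PSComp_eq_subst _ (LT.endo_const b)]

theorem subst_endo_one (f : O⟦X⟧) : subst (LT.endo 1) f = f := by
  rw [LT.endo_one, X_subst]

theorem subst_endo_comm (f : O⟦X⟧) (a b : O) :
    subst (LT.endo b) (subst (LT.endo a) f) = subst (LT.endo a) (subst (LT.endo b) f) := by
  rw [subst_endo_subst_endo, subst_endo_subst_endo, mul_comm]

noncomputable def substEndoHom (a : O) : O⟦X⟧ →+* O⟦X⟧ :=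
  (substAlgHom (LT.hasSubst_endo a)).toRingHom

theorem substEndoHom_apply (a : O) (f : O⟦X⟧) : LT.substEndoHom a f = subst (LT.endo a) f := by
  simp [substEndoHom, coe_substAlgHom]

noncomputable def substEndoEquiv (u : Oˣ) : O⟦X⟧ ≃+* O⟦X⟧ where
  toFun := subst (LT.endo u)
  invFun := subst (LT.endo ↑u⁻¹)
  left_inv f := by simp only [subst_endo_subst_endo, Units.mul_inv, subst_endo_one]
  right_inv f := by simp only [subst_endo_subst_endo, Units.inv_mul, subst_endo_one]
  map_mul' := subst_mul (LT.hasSubst_endo u)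
  map_add' := subst_add (LT.hasSubst_endo u)

theorem map_endo_uniformizer :
    map (Ideal.Quotient.mk (Ideal.span {π})) (LT.endo π) = X ^ q := by
  ext n
  rw [coeff_map, coeff_X_pow, ← map_one (Ideal.Quotient.mk _), ← map_zero (Ideal.Quotient.mk _),
    ← apply_ite, Ideal.Quotient.eq]
  exact LT.endo_pi_frob n

theorem isCoords [IsDomain O] [IsNoetherianRing O] (hπ : Irreducible π)
    {D : O⟦X⟧ → Fin q → O⟦X⟧}
    (hD : ∀ f, f = ∑ i : Fin q, X ^ (i : ℕ) * subst (LT.endo π) (D f i)) :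
    IsCoords (LT.substEndoHom π) (fun i : Fin q => X ^ (i : ℕ)) D where
  repr f := by simpa only [substEndoHom_apply] using hD f
  eq_zero g hg := eq_zero_of_sum_X_pow_mul_subst_eq_zero hπ.not_isUnit hπ.ne_zero
    (LT.hasSubst_endo π) LT.map_endo_uniformizer (by simpa only [substEndoHom_apply] using hg)

theorem psi_substEndoEquiv [IsDomain O] [IsNoetherianRing O] (hπ : Irreducible π)
    {D : O⟦X⟧ → Fin q → O⟦X⟧}
    (hD : ∀ f, f = ∑ i : Fin q, X ^ (i : ℕ) * subst (LT.endo π) (D f i))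
    {ψ : O⟦X⟧ → O⟦X⟧} (hψ : ∀ f, C π * ψ f = ∑ i : Fin q, D (X ^ (i : ℕ) * f) i)
    (u : Oˣ) (f : O⟦X⟧) : ψ (LT.substEndoEquiv u f) = LT.substEndoEquiv u (ψ f) :=
  (LT.isCoords hπ hD).commute_of_mul_eq_trace (LT.substEndoEquiv u)
    (fun r => by simp only [substEndoHom_apply]; exact LT.subst_endo_comm r π u)
    ((map_ne_zero_iff C C_injective).mpr hπ.ne_zero) (subst_C _) hψ f

theorem comp_C_mul_X_eq_subst_endo {F : Type*} [CommRing F] [IsDomain F] [CharZero F]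
    [Algebra O F] {cp : O⟦X⟧ → ℕ → Polynomial F}
    (hcp : ∀ f n a,
      (cp f n).eval (algebraMap O F a) = algebraMap O F (coeff n (subst (LT.endo a) f)))
    (f : O⟦X⟧) (n : ℕ) (b : O) :
    (cp f n).comp (Polynomial.C (algebraMap O F b) * Polynomial.X) =
      cp (subst (LT.endo b) f) n := by
  refine Polynomial.eq_of_infinite_eval_eq _ _ <|
    Set.infinite_of_injective_forall_mem Nat.cast_injective fun k : ℕ => ?_
  simp only [Set.mem_ofPred_eq, Polynomial.eval_comp, Polynomial.eval_mul, Polynomial.eval_C,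
    Polynomial.eval_X, ← map_natCast (algebraMap O F) k, ← map_mul, hcp, subst_endo_subst_endo]

end LubinTate

theorem stmt10_general (p : ℕ) [Fact p.Prime] (F : Type*) [Field F] [Algebra ℚ_[p] F]
    [FiniteDimensional ℚ_[p] F] [Algebra ℤ_[p] F] [IsScalarTower ℤ_[p] ℚ_[p] F]
    (O : Subalgebra ℤ_[p] F) (hO : O = integralClosure ℤ_[p] F)
    (π : ↥O) (hπ : Irreducible π) (q : ℕ)
    (LT : LubinTate ↥O π q)
    -- `D f` is the (unique) decomposition of `f` in the basis `1, X, ..., X^(q-1)` of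
    -- `↥O⟦X⟧` over `φ(↥O⟦X⟧)`, where `φ(h) = h(LT.endo π)`:
    (D : PowerSeries ↥O → Fin q → PowerSeries ↥O)
    (hD : ∀ f : PowerSeries ↥O,
      f = ∑ i : Fin q, PowerSeries.X ^ (i : ℕ) * PSComp (D f i) (LT.endo π))
    -- `ψ` is characterized by `φ(ψ(f)) = (1/π)·Tr(f)`, i.e. `π·ψ(f)` is the sum of the
    -- diagonal entries of the matrix of multiplication by `f` in the above basis:
    (ψ : PowerSeries ↥O → PowerSeries ↥O)
    (hψ : ∀ f : PowerSeries ↥O,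
      PowerSeries.C (R := ↥O) (π) * ψ f = ∑ i : Fin q, D (PowerSeries.X ^ (i : ℕ) * f) i)
    -- `cpoly f n` is the integer-valued polynomial `c_{f,n} ∈ F[T]` with
    -- `f([a](X)) = ∑ n, c_{f,n}(a) X^n`:
    (cpoly : PowerSeries ↥O → ℕ → Polynomial F)
    (hcpoly : ∀ (f : PowerSeries ↥O) (n : ℕ) (a : ↥O),
      Polynomial.eval (algebraMap ↥O F a) (cpoly f n) =
        algebraMap ↥O F (PowerSeries.coeff (R := ↥O) n (PSComp f (LT.endo a))))
    (M : Set (PowerSeries ↥O))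
    (hM : M = Set.univ ∨ M = {f : PowerSeries ↥O | ψ f = 0})
    (b : ↥O) (hb : IsUnit b) :
    ∀ P ∈ Submodule.span ↥O {c : Polynomial F | ∃ f ∈ M, ∃ n : ℕ, c = cpoly f n},
      P.comp (Polynomial.C (algebraMap ↥O F b) * Polynomial.X) ∈
        Submodule.span ↥O {c : Polynomial F | ∃ f ∈ M, ∃ n : ℕ, c = cpoly f n} := by
  subst hO
  have : CharZero F := charZero_of_injective_algebraMap (algebraMap ℚ_[p] F).injective
  have : IsNoetherianRing (integralClosure ℤ_[p] F) :=
    integralClosure.isNoetherianRing (A := ℤ_[p]) (K := ℚ_[p]) (L := F)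
  simp only [PSComp_eq_subst _ (LT.endo_const _)] at hD hcpoly
  obtain ⟨u, rfl⟩ := hb
  have hM_subst : ∀ f ∈ M, LT.substEndoEquiv u f ∈ M := by
    rcases hM with rfl | rfl
    · exact fun f _ => Set.mem_univ _
    · intro f (hf : ψ f = 0)
      change ψ _ = 0
      rw [LT.psi_substEndoEquiv hπ hD hψ, hf, map_zero]
  intro P hP
  refine (Submodule.map_span_le ((Polynomial.aeval _).toLinearMap.restrictScalars _) _ _).mpr
    ?_ ⟨P, hP, rfl⟩
  rintro _ ⟨f, hf, n, rfl⟩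
  exact Submodule.subset_span ⟨_, hM_subst f hf, n, LT.comp_C_mul_X_eq_subst_endo hcpoly f n u⟩

/-- `Pol(M)` is stable under `P(T) ↦ P(bT)` for units `b`, where `M` is `o_F[[X]]` or
`o_F[[X]]^(ψ=0)` and `Pol(M)` is the `o_F`-span of the coefficient polynomials `c_(f,n)`
for `f ∈ M`. -/
theorem stmt10 (p : ℕ) [Fact p.Prime] (F : Type*) [Field F] [Algebra ℚ_[p] F]
    [FiniteDimensional ℚ_[p] F] [Algebra ℤ_[p] F] [IsScalarTower ℤ_[p] ℚ_[p] F]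
    (O : Subalgebra ℤ_[p] F) (hO : O = integralClosure ℤ_[p] F)
    (π : ↥O) (hπ : Irreducible π) (q : ℕ)
    (hq : Nat.card (↥O ⧸ Ideal.span {π}) = q)
    (LT : LubinTate ↥O π q)
    -- `D f` is the (unique) decomposition of `f` in the basis `1, X, ..., X^(q-1)` of
    -- `↥O⟦X⟧` over `φ(↥O⟦X⟧)`, where `φ(h) = h(LT.endo π)`:
    (D : PowerSeries ↥O → Fin q → PowerSeries ↥O)
    (hD : ∀ f : PowerSeries ↥O,
      f = ∑ i : Fin q, PowerSeries.X ^ (i : ℕ) * PSComp (D f i) (LT.endo π))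
    -- `ψ` is characterized by `φ(ψ(f)) = (1/π)·Tr(f)`, i.e. `π·ψ(f)` is the sum of the
    -- diagonal entries of the matrix of multiplication by `f` in the above basis:
    (ψ : PowerSeries ↥O → PowerSeries ↥O)
    (hψ : ∀ f : PowerSeries ↥O,
      PowerSeries.C (R := ↥O) (π) * ψ f = ∑ i : Fin q, D (PowerSeries.X ^ (i : ℕ) * f) i)
    -- `cpoly f n` is the integer-valued polynomial `c_{f,n} ∈ F[T]` with
    -- `f([a](X)) = ∑ n, c_{f,n}(a) X^n`:
    (cpoly : PowerSeries ↥O → ℕ → Polynomial F)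
    (hcpoly : ∀ (f : PowerSeries ↥O) (n : ℕ) (a : ↥O),
      Polynomial.eval (algebraMap ↥O F a) (cpoly f n) =
        algebraMap ↥O F (PowerSeries.coeff (R := ↥O) n (PSComp f (LT.endo a))))
    (M : Set (PowerSeries ↥O))
    (hM : M = Set.univ ∨ M = {f : PowerSeries ↥O | ψ f = 0})
    (b : ↥O) (hb : IsUnit b) :
    ∀ P ∈ Submodule.span ↥O {c : Polynomial F | ∃ f ∈ M, ∃ n : ℕ, c = cpoly f n},
      P.comp (Polynomial.C (algebraMap ↥O F b) * Polynomial.X) ∈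
        Submodule.span ↥O {c : Polynomial F | ∃ f ∈ M, ∃ n : ℕ, c = cpoly f n} :=
  stmt10_general p F O hO π hπ q LT D hD ψ hψ cpoly hcpoly M hM b hb
end
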